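/- Assume Hom(M⟦1⟧, Y) = 0 and assume that M₁ lies in add(M). Then Hom_{K(T)}(P•, P•⟦-1⟧) = 0, i.e. every morphism from P• to the shifted complex P•⟦-1⟧ in the homotopy category K(T) is zero. Concretely: every morphism v : M ⊞ M₁ ⟶ X with v ≫ d̄ = 0 and d̄ ≫ v = 0 is zero. -/

import Mathlib

/-
A morphism `v : M ⊞ M₁ ⟶ X` with `v ≫ d̄ = 0` satisfies `v ≫ f = 0`, so by the distinguished
triangle it factors through `Y⟦-1⟧ ⟶ X`. But `Hom(N, Y⟦-1⟧) ≅ Hom(N⟦1⟧, Y)` vanishes for `N = M`,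
hence for every `N ∈ add M`, in particular for `N = M ⊞ M₁`; so `v = 0`. A chain map
`P• ⟶ P•⟦-1⟧` has a single component that can be nonzero, namely such a `v`, so it vanishes
already before passing to `K(T)`.
-/

open CategoryTheory CategoryTheory.Limits CategoryTheory.Pretriangulated ZeroObject

universe v u

/-- The object part of the cochain complex concentrated in degrees `0` and `1`,
with `A` in degree `0` and `B` in degree `1`. -/
noncomputable def twoObj {C : Type u} [Category.{v} C] [HasZeroObject C]
    (A B : C) (i : ℤ) : C :=
  if i = 0 then A else if i = 1 then B else 0

/-- The cochain complex over `C` concentrated in degrees `0` and `1`, with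
`A` in degree `0`, `B` in degree `1` and differential `d : A ⟶ B`. -/
noncomputable def twoTermComplex {C : Type u} [Category.{v} C] [Preadditive C]
    [HasZeroObject C] {A B : C} (d : A ⟶ B) : CochainComplex C ℤ where
  X := twoObj A B
  d i j :=
    if hij : i = 0 ∧ j = 1 then
      eqToHom (show twoObj A B i = A by simp [twoObj, hij.1]) ≫ d ≫
        eqToHom (show B = twoObj A B j by simp [twoObj, hij.2])
    else 0
  shape i j hij := by
    try dsimp only
    rw [dif_neg]
    rintro ⟨rfl, rfl⟩
    exact hij rfl
  d_comp_d' i j k hij hjk := by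
    try dsimp only
    by_cases h' : i = 0 ∧ j = 1
    · rw [dif_neg (fun hk : j = 0 ∧ k = 1 => by simp [h'.2] at hk), comp_zero]
    · rw [dif_neg h', zero_comp]

namespace CategoryTheory

variable {C : Type u} [Category.{v} C] [Preadditive C]

lemma Retract.hom_eq_zero {A B Z : C} (e : Retract B A) (h : ∀ φ : A ⟶ Z, φ = 0)
    (φ : B ⟶ Z) : φ = 0 := by
  rw [← e.retract_assoc φ, h (e.r ≫ φ), comp_zero]

lemma Limits.biproduct.hom_eq_zero {ι : Type*} {f : ι → C} [HasBiproduct f] {Z : C}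
    (h : ∀ i (φ : f i ⟶ Z), φ = 0) (φ : ⨁ f ⟶ Z) : φ = 0 :=
  biproduct.hom_ext' _ _ fun i => by rw [h i (biproduct.ι f i ≫ φ), comp_zero]

lemma Limits.biprod.hom_eq_zero [HasBinaryBiproducts C] {A B Z : C} (hA : ∀ φ : A ⟶ Z, φ = 0)
    (hB : ∀ φ : B ⟶ Z, φ = 0) (φ : A ⊞ B ⟶ Z) : φ = 0 :=
  biprod.hom_ext' _ _ (by rw [hA (biprod.inl ≫ φ), comp_zero])
    (by rw [hB (biprod.inr ≫ φ), comp_zero])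

section Shift

-- qualified, since inside `Pretriangulated.Triangle` it would resolve to `Triangle.shiftFunctor`
variable [HasShift C ℤ] [∀ n : ℤ, (CategoryTheory.shiftFunctor C n).Additive]

lemma eq_zero_of_forall_shift_hom_eq_zero {A Y : C} (n : ℤ) (h : ∀ φ : A⟦n⟧ ⟶ Y, φ = 0)
    (ψ : A ⟶ Y⟦-n⟧) : ψ = 0 :=
  have : (shiftEquiv C n).functor.Additive := inferInstanceAs (shiftFunctor C n).Additive
  ((shiftEquiv C n).toAdjunction.homAddEquiv A Y).symm.map_eq_zero_iff.mp (h _)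

lemma Pretriangulated.Triangle.eq_zero_of_comp_mor₁_eq_zero [HasZeroObject C] [Pretriangulated C]
    {Tr : Triangle C} (hTr : Tr ∈ distTriang C) {A : C}
    (hA : ∀ φ : A ⟶ Tr.obj₃⟦(-1 : ℤ)⟧, φ = 0) (v : A ⟶ Tr.obj₁) (hv : v ≫ Tr.mor₁ = 0) :
    v = 0 := by
  obtain ⟨w, rfl⟩ := Triangle.coyoneda_exact₂ _ (inv_rot_of_distTriang _ hTr) v hv
  rw [hA w]
  exact zero_comp

end Shift

end CategoryTheory

variable {C : Type u} [Category.{v} C] [Preadditive C]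

lemma CochainComplex.hom_shift_neg_one_eq_zero (K : CochainComplex C ℤ)
    (hK : ∀ i, i ≠ 0 → i ≠ 1 → IsZero (K.X i))
    (hd : ∀ v : K.X 1 ⟶ K.X 0, v ≫ K.d 0 1 = 0 → v = 0)
    (ψ : K ⟶ K⟦(-1 : ℤ)⟧) : ψ = 0 := by
  ext i
  by_cases h1 : i = 1
  · subst h1
    -- the square in degrees `1 ⟶ 2` reads `ψ¹ ≫ (-d⁰¹) = 0`, because `K²` is zero
    have hcomm := ψ.comm 1 2
    simp only [CochainComplex.shiftFunctor_obj_d', Int.negOnePow_neg, Int.negOnePow_one,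
      Units.neg_smul, one_smul, (hK 2 (by norm_num) (by norm_num)).eq_of_tgt (K.d 1 2) 0] at hcomm
    exact hd (ψ.f 1) (neg_eq_zero.mp ((Preadditive.comp_neg (ψ.f 1) (K.d 0 1)).symm.trans
      (hcomm.trans zero_comp)))
  by_cases h0 : i = 0
  · subst h0
    exact (hK (0 + -1) (by norm_num) (by norm_num)).eq_of_tgt _ _
  · exact (hK i h0 h1).eq_of_src _ _

lemma HomotopyCategory.eq_zero_of_forall_hom_shift_eq_zero {K L : CochainComplex C ℤ} {n : ℤ}
    (h : ∀ ψ : K ⟶ L⟦n⟧, ψ = 0)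
    (φ : (quotient C (ComplexShape.up ℤ)).obj K ⟶ ((quotient C (ComplexShape.up ℤ)).obj L)⟦n⟧) :
    φ = 0 := by
  obtain ⟨ψ, hψ⟩ := (quotient C (ComplexShape.up ℤ)).map_surjective
    (φ ≫ ((quotient C (ComplexShape.up ℤ)).commShiftIso n).inv.app L)
  rw [← cancel_mono (((quotient C _).commShiftIso n).inv.app L), ← hψ, h ψ, Functor.map_zero,
    zero_comp]

namespace twoTermComplex

variable [HasZeroObject C] {A B : C} (d : A ⟶ B)

lemma d_zero_one : (twoTermComplex d).d 0 1 = d := by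
  -- `twoObj A B 0` and `twoObj A B 1` reduce to `A` and `B`, so both `eqToHom`s are identities
  change eqToHom (rfl : A = A) ≫ d ≫ eqToHom (rfl : B = B) = d
  simp

lemma isZero_X {i : ℤ} (h0 : i ≠ 0) (h1 : i ≠ 1) : IsZero ((twoTermComplex d).X i) := by
  simpa [twoTermComplex, twoObj, h0, h1] using isZero_zero C

lemma hom_shift_neg_one_eq_zero (hd : ∀ v : B ⟶ A, v ≫ d = 0 → v = 0)
    (ψ : twoTermComplex d ⟶ (twoTermComplex d)⟦(-1 : ℤ)⟧) : ψ = 0 :=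
  CochainComplex.hom_shift_neg_one_eq_zero _ (fun _ => isZero_X d)
    (fun v hv => hd v (by rwa [d_zero_one] at hv)) ψ

end twoTermComplex

/-- Let `T` be a pretriangulated category with binary biproducts,
`M` an object of `T` and `X ⟶f M₁ ⟶g Y ⟶h X⟦1⟧` a distinguished triangle.
Assume `Hom(M⟦1⟧, Y) = 0` and `M₁ ∈ add M`.  Then
`Hom_{K(T)}(P•, P•⟦-1⟧) = 0` for the two-term complex `P• = (X ⟶d̄ M ⊞ M₁)`;
concretely, every `v : M ⊞ M₁ ⟶ X` with `v ≫ d̄ = 0` and `d̄ ≫ v = 0` is zero. -/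
theorem statement8 {T : Type u} [Category.{v} T] [Preadditive T] [HasZeroObject T]
    [HasShift T ℤ] [∀ n : ℤ, (shiftFunctor T n).Additive] [Pretriangulated T]
    [HasBinaryBiproducts T] [HasFiniteBiproducts T]
    (M X M₁ Y : T) (f : X ⟶ M₁) (g : M₁ ⟶ Y) (h : Y ⟶ X⟦(1 : ℤ)⟧)
    (hT : Triangle.mk f g h ∈ distTriang T)
    (hadd : ∃ (n : ℕ) (s : M₁ ⟶ ⨁ fun _ : Fin n => M) (r : (⨁ fun _ : Fin n => M) ⟶ M₁),
      s ≫ r = 𝟙 M₁)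
    (hMY : ∀ φ : (M⟦(1 : ℤ)⟧ : T) ⟶ Y, φ = 0)
    (P : CochainComplex T ℤ) (hP : P = twoTermComplex (biprod.lift (0 : X ⟶ M) f)) :
    (∀ φ : (HomotopyCategory.quotient T (ComplexShape.up ℤ)).obj P ⟶
        (((HomotopyCategory.quotient T (ComplexShape.up ℤ)).obj P)⟦(-1 : ℤ)⟧), φ = 0) ∧
      (∀ v : (M ⊞ M₁) ⟶ X,
        v ≫ biprod.lift (0 : X ⟶ M) f = 0 → biprod.lift (0 : X ⟶ M) f ≫ v = 0 → v = 0) := by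
  obtain ⟨n, s, r, hsr⟩ := hadd
  have hM : ∀ φ : M ⟶ Y⟦(-1 : ℤ)⟧, φ = 0 := eq_zero_of_forall_shift_hom_eq_zero 1 hMY
  have hM₁ : ∀ φ : M₁ ⟶ Y⟦(-1 : ℤ)⟧, φ = 0 :=
    Retract.hom_eq_zero ⟨s, r, hsr⟩ (biproduct.hom_eq_zero fun _ => hM)
  have hd : ∀ v : M ⊞ M₁ ⟶ X, v ≫ biprod.lift (0 : X ⟶ M) f = 0 → v = 0 := by
    intro v hv
    have hvf : v ≫ f = 0 := by simpa using hv =≫ biprod.snd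
    exact Triangle.eq_zero_of_comp_mor₁_eq_zero hT (biprod.hom_eq_zero hM hM₁) v hvf
  subst hP
  exact ⟨HomotopyCategory.eq_zero_of_forall_hom_shift_eq_zero
    (twoTermComplex.hom_shift_neg_one_eq_zero _ hd), fun v hv _ => hd v hv⟩
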